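/- arXiv:1602.01919 — 3 statements merged into one kernel-verified Lean document; each statement's English description precedes it below -/
import Mathlib

section
/- In the vector space V with basis the finite reduced paths from v in a locally finite nonsingular tree X, let M be the span of the elements w_μ − Σ_f w_{μf} (sum over edges f with r(f) = s(μ) and μf reduced). Then the kernel of the linear map L : V → C(v∂X) sending w_μ to χ_{Z(μ)} equals M. -/
/-!
The relators lie in the kernel because `Z(μ)` is the disjoint union of the cylinders `Z(μf)`
of the one-edge extensions of `μ`. Conversely, modulo the relators every element of `V` can be
pushed down to a combination of paths of one common length `n ≥ 1`. Cylinders of distinct paths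
of equal length are disjoint, and by nonsingularity every nonempty reduced path extends to an
infinite one, so its cylinder is nonempty; hence such a combination in the kernel vanishes.
-/

/-- A graph in the sense of Serre. -/
structure SerreGraph where
  V : Type
  E : Type
  r : E → V
  s : E → V
  bar : E → E
  bar_ne : ∀ e, bar e ≠ e
  bar_bar : ∀ e, bar (bar e) = e
  s_eq : ∀ e, s e = r (bar e)

namespace SerreGraph

/-- `IsPathFrom x y p` : the edge list `p` is a path with range `x` and source `y`. -/
def IsPathFrom (Γ : SerreGraph) : Γ.V → Γ.V → List Γ.E → Prop
  | x, y, [] => x = y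
  | x, y, e :: p => Γ.r e = x ∧ Γ.IsPathFrom (Γ.s e) y p

/-- A path is reduced if it has no immediate backtracking. -/
def Reduced (Γ : SerreGraph) (p : List Γ.E) : Prop :=
  List.Chain' (fun e f => f ≠ Γ.bar e) p

/-- Connectedness. -/
def Connected (Γ : SerreGraph) : Prop :=
  ∀ x y : Γ.V, ∃ p : List Γ.E, Γ.IsPathFrom x y p

/-- A tree is a connected graph with no nontrivial reduced loops. -/
def IsTree (Γ : SerreGraph) : Prop :=
  Γ.Connected ∧ ∀ (x : Γ.V) (p : List Γ.E), Γ.IsPathFrom x x p → Γ.Reduced p → p = []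

/-- An infinite reduced path with range `x`. -/
def IsInfPathFrom (Γ : SerreGraph) (x : Γ.V) (ξ : ℕ → Γ.E) : Prop :=
  Γ.r (ξ 0) = x ∧ (∀ i, Γ.s (ξ i) = Γ.r (ξ (i + 1))) ∧ (∀ i, ξ (i + 1) ≠ Γ.bar (ξ i))

/-- The boundary from `x`: the set of infinite reduced paths with range `x`. -/
def Boundary (Γ : SerreGraph) (x : Γ.V) : Type :=
  {ξ : ℕ → Γ.E // Γ.IsInfPathFrom x ξ}

/-- An infinite path extends a finite path if its initial segment is that path. -/
def Extends (Γ : SerreGraph) (ξ : ℕ → Γ.E) (μ : List Γ.E) : Prop :=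
  ∀ (i : ℕ) (h : i < μ.length), ξ i = μ.get ⟨i, h⟩

/-- The cylinder set of a finite path `μ`: boundary points extending `μ`. -/
def Cyl (Γ : SerreGraph) (x : Γ.V) (μ : List Γ.E) : Set (Γ.Boundary x) :=
  {ξ | Γ.Extends ξ.1 μ}

/-- The collection of cylinder sets of finite reduced paths with range `x`. -/
def cylBasis (Γ : SerreGraph) (x : Γ.V) : Set (Set (Γ.Boundary x)) :=
  {S | ∃ (μ : List Γ.E) (y : Γ.V), Γ.IsPathFrom x y μ ∧ Γ.Reduced μ ∧ S = Γ.Cyl x μ}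

/-- The boundary is topologized with the cylinder sets as a base. -/
instance boundaryTopology (Γ : SerreGraph) (x : Γ.V) : TopologicalSpace (Γ.Boundary x) :=
  TopologicalSpace.generateFrom (Γ.cylBasis x)

end SerreGraph

/-- The type of finite reduced paths with range `v` in `Γ`. -/
def RedPaths (Γ : SerreGraph) (v : Γ.V) : Type :=
  {p : List Γ.E // ∃ y : Γ.V, Γ.IsPathFrom v y p ∧ Γ.Reduced p}

open scoped BigOperators

namespace SerreGraph

variable {Γ : SerreGraph}

theorem isPathFrom_append_iff {x y z : Γ.V} {p q : List Γ.E} (hp : Γ.IsPathFrom x y p) :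
    Γ.IsPathFrom x z (p ++ q) ↔ Γ.IsPathFrom y z q := by
  induction p generalizing x with
  | nil => cases hp; rfl
  | cons e p ih => simp only [List.cons_append, IsPathFrom, hp.1, true_and, ih hp.2]

theorem exists_r_eq_s_ne_bar (hns : ∀ x : Γ.V, ¬ ∃! e : Γ.E, Γ.r e = x) (e : Γ.E) :
    ∃ f : Γ.E, Γ.r f = Γ.s e ∧ f ≠ Γ.bar e := by
  by_contra! h
  exact hns (Γ.s e) ⟨Γ.bar e, (Γ.s_eq e).symm, h⟩

/-- The tail is produced by repeatedly choosing an edge that leaves the current source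
without backtracking, which nonsingularity provides. -/
theorem exists_isInfPathFrom_extends (hns : ∀ x : Γ.V, ¬ ∃! e : Γ.E, Γ.r e = x)
    (e : Γ.E) (p : List Γ.E) {x y : Γ.V} (hpath : Γ.IsPathFrom x y (e :: p))
    (hred : Γ.Reduced (e :: p)) : ∃ ξ, Γ.IsInfPathFrom x ξ ∧ Γ.Extends ξ (e :: p) := by
  choose next next_r next_ne using exists_r_eq_s_ne_bar hns
  induction p generalizing e x with
  | nil =>
    refine ⟨fun i => next^[i] e, ⟨hpath.1, fun i => ?_, fun i => ?_⟩, ?_⟩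
    · simp only [Function.iterate_succ_apply', next_r]
    · simp only [Function.iterate_succ_apply', next_ne, ne_eq, not_false_eq_true]
    · intro i hi
      simp only [List.length_singleton, Nat.lt_one_iff] at hi
      subst hi
      rfl
  | cons f p ih =>
    obtain ⟨hfe, hred'⟩ := List.isChain_cons_cons.1 hred
    obtain ⟨η, ⟨hη0, hηs, hηne⟩, hηext⟩ := ih f hpath.2 hred'
    refine ⟨fun | 0 => e | i + 1 => η i, ⟨hpath.1, ?_, ?_⟩, ?_⟩
    · rintro (_ | i)
      · exact hη0.symm
      · exact hηs i
    · rintro (_ | i)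
      · simpa [hηext 0 (by simp)] using hfe
      · exact hηne i
    · rintro (_ | i) hi
      · rfl
      · exact hηext i (by simpa using hi)

theorem exists_mem_cyl (hns : ∀ x : Γ.V, ¬ ∃! e : Γ.E, Γ.r e = x) {x y : Γ.V}
    {μ : List Γ.E} (hpath : Γ.IsPathFrom x y μ) (hred : Γ.Reduced μ) (hμ : μ ≠ []) :
    ∃ ξ : Γ.Boundary x, ξ ∈ Γ.Cyl x μ := by
  obtain ⟨e, p, rfl⟩ := List.exists_cons_of_ne_nil hμ
  obtain ⟨ξ, hξ, hext⟩ := exists_isInfPathFrom_extends hns e p hpath hred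
  exact ⟨⟨ξ, hξ⟩, hext⟩

theorem mem_cyl_iff {x : Γ.V} {ξ : Γ.Boundary x} {μ : List Γ.E} :
    ξ ∈ Γ.Cyl x μ ↔ μ = (List.range μ.length).map ξ.1 := by
  constructor
  · intro h
    refine List.ext_getElem (by simp) fun i h₁ h₂ => ?_
    simp [h i h₁]
  · intro h i hi
    simpa using (List.getElem_of_eq h hi).symm

theorem eq_of_mem_cyl_of_length_eq {x : Γ.V} {ξ : Γ.Boundary x} {μ ν : List Γ.E}
    (hμ : ξ ∈ Γ.Cyl x μ) (hν : ξ ∈ Γ.Cyl x ν) (hlen : μ.length = ν.length) : μ = ν := by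
  rw [mem_cyl_iff.1 hμ, mem_cyl_iff.1 hν, hlen]

theorem cyl_append_subset (x : Γ.V) (μ ν : List Γ.E) : Γ.Cyl x (μ ++ ν) ⊆ Γ.Cyl x μ :=
  fun _ h i hi => by
    simpa [List.getElem_append_left hi] using h i (by simp only [List.length_append]; omega)

end SerreGraph

namespace SerreGraph.Boundary

variable {Γ : SerreGraph} {x : Γ.V}

theorem isPathFrom_map_range (ξ : Γ.Boundary x) (n : ℕ) :
    Γ.IsPathFrom x (Γ.r (ξ.1 n)) ((List.range n).map ξ.1) := by
  induction n with
  | zero => exact ξ.2.1.symm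
  | succ n ih =>
    rw [List.range_succ, List.map_append, isPathFrom_append_iff ih]
    exact ⟨rfl, ξ.2.2.1 n⟩

theorem reduced_map_range (ξ : Γ.Boundary x) (n : ℕ) : Γ.Reduced ((List.range n).map ξ.1) := by
  cases n with
  | zero => exact List.isChain_nil
  | succ n =>
    exact (List.isChain_map _).2 <| (List.isChain_range_succ _ n).2 fun i _ => ξ.2.2.2 i

def take (ξ : Γ.Boundary x) (n : ℕ) : RedPaths Γ x :=
  ⟨(List.range n).map ξ.1, _, ξ.isPathFrom_map_range n, ξ.reduced_map_range n⟩

theorem val_take (ξ : Γ.Boundary x) (n : ℕ) : (ξ.take n).1 = (List.range n).map ξ.1 := rfl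

theorem mem_cyl_take (ξ : Γ.Boundary x) (n : ℕ) : ξ ∈ Γ.Cyl x (ξ.take n).1 :=
  mem_cyl_iff.2 (by simp [val_take])

end SerreGraph.Boundary

namespace RedPaths

open SerreGraph

variable {Γ : SerreGraph} {v : Γ.V}

def children (μ : RedPaths Γ v) : Set (RedPaths Γ v) :=
  {ν | ∃ f : Γ.E, ν.1 = μ.1 ++ [f]}

theorem length_of_mem_children {μ ν : RedPaths Γ v} (h : ν ∈ μ.children) :
    ν.1.length = μ.1.length + 1 := by
  obtain ⟨f, hf⟩ := h
  simp [hf]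

theorem children_finite (hlf : ∀ x : Γ.V, {e : Γ.E | Γ.r e = x}.Finite) (μ : RedPaths Γ v) :
    μ.children.Finite := by
  obtain ⟨y, hy, -⟩ := μ.2
  refine (((hlf y).image fun f => μ.1 ++ [f]).preimage Subtype.val_injective.injOn).subset ?_
  rintro ν ⟨f, hf⟩
  obtain ⟨z, hz, -⟩ := ν.2
  rw [hf, isPathFrom_append_iff hy] at hz
  exact ⟨f, hz.1, hf.symm⟩

theorem take_succ_mem_children {μ : RedPaths Γ v} {ξ : Γ.Boundary v} (hξ : ξ ∈ Γ.Cyl v μ.1) :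
    ξ.take (μ.1.length + 1) ∈ μ.children := by
  refine ⟨ξ.1 μ.1.length, ?_⟩
  rw [Boundary.val_take, List.range_succ, List.map_append, ← mem_cyl_iff.1 hξ]
  rfl

/-- The only child of `μ` whose cylinder contains a point `ξ` of `Z(μ)` is `ξ.take (|μ| + 1)`. -/
theorem indicator_cyl_eq_sum_children {R : Type*} [AddCommMonoidWithOne R]
    (hlf : ∀ x : Γ.V, {e : Γ.E | Γ.r e = x}.Finite) (μ : RedPaths Γ v) :
    (Γ.Cyl v μ.1).indicator (fun _ => (1 : R)) =
      ∑ ν ∈ (children_finite hlf μ).toFinset, (Γ.Cyl v ν.1).indicator fun _ => 1 := by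
  ext ξ
  rw [Finset.sum_apply]
  by_cases hξ : ξ ∈ Γ.Cyl v μ.1
  · have hchild := take_succ_mem_children hξ
    rw [Set.indicator_of_mem hξ, Finset.sum_eq_single_of_mem _ (by simpa using hchild),
      Set.indicator_of_mem (ξ.mem_cyl_take _)]
    intro ν hν hne
    refine Set.indicator_of_notMem (fun hξν => hne (Subtype.ext ?_)) _
    refine eq_of_mem_cyl_of_length_eq hξν (ξ.mem_cyl_take _) ?_
    rw [length_of_mem_children ((Set.Finite.mem_toFinset _).1 hν),
      length_of_mem_children hchild]
  · rw [Set.indicator_of_notMem hξ, eq_comm]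
    refine Finset.sum_eq_zero fun ν hν => Set.indicator_of_notMem (fun hξν => hξ ?_) _
    obtain ⟨f, hf⟩ := (Set.Finite.mem_toFinset _).1 hν
    exact cyl_append_subset v μ.1 [f] (hf ▸ hξν)

end RedPaths

namespace RedPaths

open SerreGraph Submodule

variable (R : Type*) [Ring R] {Γ : SerreGraph} {v : Γ.V}

variable (Γ v) in
noncomputable def cylMap : (RedPaths Γ v →₀ R) →ₗ[R] (Γ.Boundary v → R) :=
  Finsupp.linearCombination R fun μ => (Γ.Cyl v μ.1).indicator fun _ => 1

noncomputable def relator (μ : RedPaths Γ v) : RedPaths Γ v →₀ R :=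
  Finsupp.single μ 1 - ∑ᶠ ν ∈ μ.children, Finsupp.single ν 1

variable {R}

theorem cylMap_relator (hlf : ∀ x : Γ.V, {e : Γ.E | Γ.r e = x}.Finite) (μ : RedPaths Γ v) :
    cylMap R Γ v (relator R μ) = 0 := by
  rw [relator, finsum_mem_eq_finite_toFinset_sum _ (children_finite hlf μ), map_sub, map_sum,
    sub_eq_zero]
  simp only [cylMap, Finsupp.linearCombination_single, one_smul]
  exact indicator_cyl_eq_sum_children hlf μ

theorem single_mem_span_relator_sup_supported (hlf : ∀ x : Γ.V, {e : Γ.E | Γ.r e = x}.Finite)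
    {n : ℕ} {μ : RedPaths Γ v} (hμ : μ.1.length ≤ n) :
    Finsupp.single μ 1 ∈ span R (Set.range (relator R)) ⊔
      Finsupp.supported R R {ν : RedPaths Γ v | ν.1.length = n} := by
  obtain ⟨k, hk⟩ := Nat.exists_eq_add_of_le hμ
  induction k generalizing μ with
  | zero => exact mem_sup_right (Finsupp.single_mem_supported R 1 hk.symm)
  | succ k ih =>
    have hsplit : Finsupp.single μ (1 : R) =
        relator R μ + ∑ ν ∈ (children_finite hlf μ).toFinset, Finsupp.single ν 1 := by
      rw [relator, finsum_mem_eq_finite_toFinset_sum _ (children_finite hlf μ), sub_add_cancel]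
    rw [hsplit]
    refine add_mem (mem_sup_left (subset_span ⟨μ, rfl⟩)) (sum_mem fun ν hν => ?_)
    have hν := length_of_mem_children ((Set.Finite.mem_toFinset _).1 hν)
    exact ih (by omega) (by omega)

theorem mem_span_relator_sup_supported (hlf : ∀ x : Γ.V, {e : Γ.E | Γ.r e = x}.Finite)
    {n : ℕ} {z : RedPaths Γ v →₀ R} (hz : ∀ μ ∈ z.support, μ.1.length ≤ n) :
    z ∈ span R (Set.range (relator R)) ⊔
      Finsupp.supported R R {ν : RedPaths Γ v | ν.1.length = n} := by
  rw [← Finsupp.sum_single z]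
  refine sum_mem fun μ hμ => ?_
  simpa using smul_mem _ (z μ) (single_mem_span_relator_sup_supported hlf (hz μ hμ))

theorem cylMap_apply_of_mem_cyl {n : ℕ} {w : RedPaths Γ v →₀ R}
    (hw : w ∈ Finsupp.supported R R {ν : RedPaths Γ v | ν.1.length = n}) {ν : RedPaths Γ v}
    (hν : ν.1.length = n) {ξ : Γ.Boundary v} (hξ : ξ ∈ Γ.Cyl v ν.1) :
    cylMap R Γ v w ξ = w ν := by
  rw [cylMap, Finsupp.linearCombination_apply, Finsupp.sum, Finset.sum_apply,
    Finset.sum_eq_single ν]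
  · simp [Set.indicator_of_mem hξ]
  · intro μ hμ hne
    have hlen : μ.1.length = ν.1.length := (hw hμ).trans hν.symm
    simp [Set.indicator_of_notMem fun hξμ => hne (Subtype.ext
      (eq_of_mem_cyl_of_length_eq hξμ hξ hlen))]
  · intro hν
    simp [Finsupp.notMem_support_iff.1 hν]

theorem eq_zero_of_cylMap_eq_zero (hns : ∀ x : Γ.V, ¬ ∃! e : Γ.E, Γ.r e = x) {n : ℕ}
    (hn : n ≠ 0) {w : RedPaths Γ v →₀ R}
    (hw : w ∈ Finsupp.supported R R {ν : RedPaths Γ v | ν.1.length = n})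
    (hker : cylMap R Γ v w = 0) : w = 0 := by
  ext ν
  by_cases hν : ν.1.length = n
  · obtain ⟨y, hpath, hred⟩ := ν.2
    obtain ⟨ξ, hξ⟩ := exists_mem_cyl hns hpath hred (List.ne_nil_of_length_pos (by omega))
    rw [← cylMap_apply_of_mem_cyl hw hν hξ, hker, Pi.zero_apply, Finsupp.coe_zero,
      Pi.zero_apply]
  · exact Finsupp.notMem_support_iff.1 fun h => hν (hw h)

theorem span_relator_le_ker (hlf : ∀ x : Γ.V, {e : Γ.E | Γ.r e = x}.Finite) :
    span R (Set.range (relator R)) ≤ LinearMap.ker (cylMap R Γ v) :=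
  span_le.2 fun _ ⟨μ, hμ⟩ => hμ ▸ cylMap_relator hlf μ

theorem ker_cylMap (hlf : ∀ x : Γ.V, {e : Γ.E | Γ.r e = x}.Finite)
    (hns : ∀ x : Γ.V, ¬ ∃! e : Γ.E, Γ.r e = x) :
    LinearMap.ker (cylMap R Γ v) = span R (Set.range (relator R)) := by
  refine le_antisymm (fun z hz => ?_) (span_relator_le_ker hlf)
  obtain ⟨n, hn⟩ : ∃ n, ∀ μ ∈ z.support, μ.1.length ≤ n :=
    ⟨_, fun μ hμ => Finset.le_sup (f := fun μ : RedPaths Γ v => μ.1.length) hμ⟩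
  obtain ⟨m, hm, w, hw, rfl⟩ := mem_sup.1 <|
    mem_span_relator_sup_supported hlf fun μ hμ => (hn μ hμ).trans n.le_succ
  have hmker := span_relator_le_ker hlf hm
  rw [LinearMap.mem_ker] at hz hmker
  rw [map_add, hmker, zero_add] at hz
  rwa [eq_zero_of_cylMap_eq_zero hns n.succ_ne_zero hw hz, add_zero]

end RedPaths

theorem ker_indicator_map_eq_span_general
    (Γ : SerreGraph)
    (hlf : ∀ x : Γ.V, {e : Γ.E | Γ.r e = x}.Finite)
    (hns : ∀ x : Γ.V, ¬ ∃! e : Γ.E, Γ.r e = x)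
    (v : Γ.V) :
    LinearMap.ker (Finsupp.linearCombination ℂ
        (fun μ : RedPaths Γ v => Set.indicator (Γ.Cyl v μ.1) (fun _ => (1 : ℂ)))) =
    Submodule.span ℂ
      {z : RedPaths Γ v →₀ ℂ | ∃ μ : RedPaths Γ v,
        z = Finsupp.single μ 1 -
          ∑ᶠ ν ∈ {ν : RedPaths Γ v | ∃ f : Γ.E, ν.1 = μ.1 ++ [f]},
            Finsupp.single ν (1 : ℂ)} := by
  have hrange : Set.range (RedPaths.relator ℂ) =
      {z : RedPaths Γ v →₀ ℂ | ∃ μ : RedPaths Γ v, z = RedPaths.relator ℂ μ} :=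
    Set.ext fun _ => exists_congr fun _ => eq_comm
  exact (RedPaths.ker_cylMap hlf hns).trans (congrArg _ hrange)

/-- in the free vector space on the finite reduced paths from `v`, the
kernel of the linear map `L` sending the basis vector `w_μ` to the indicator function
`χ_{Z(μ)}` equals the span `M` of the elements `w_μ − Σ_f w_{μf}` (sum over the
one-edge reduced extensions of `μ`). -/
theorem ker_indicator_map_eq_span
    (Γ : SerreGraph) (htree : Γ.IsTree)
    (hlf : ∀ x : Γ.V, {e : Γ.E | Γ.r e = x}.Finite)
    (hns : ∀ x : Γ.V, ¬ ∃! e : Γ.E, Γ.r e = x)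
    (v : Γ.V) :
    LinearMap.ker (Finsupp.linearCombination ℂ
        (fun μ : RedPaths Γ v => Set.indicator (Γ.Cyl v μ.1) (fun _ => (1 : ℂ)))) =
    Submodule.span ℂ
      {z : RedPaths Γ v →₀ ℂ | ∃ μ : RedPaths Γ v,
        z = Finsupp.single μ 1 -
          ∑ᶠ ν ∈ {ν : RedPaths Γ v | ∃ f : Γ.E, ν.1 = μ.1 ++ [f]},
            Finsupp.single ν (1 : ℂ)} :=
  ker_indicator_map_eq_span_general Γ hlf hns v
end

section
/- Let Γ be a graph (in Serre's sense), T a maximal subtree of Γ, and v a vertex. Then the fundamental group π₁(Γ, v) of the graph (all vertex and edge groups trivial) is a free group, freely generated by the elements ε(e) = [v, r(e)]·e·[s(e), v] for e ranging over an orientation of the edges of Γ not in T, where [x, y] denotes the unique reduced path in T from y to x. -/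
/-- The relations `ē · e = 1` defining the path group of a graph of trivial groups. -/
def pathRels (Γ : SerreGraph) : Set (FreeGroup Γ.E) :=
  Set.range fun e : Γ.E => FreeGroup.of (Γ.bar e) * FreeGroup.of e

/-- The path group of a graph of trivial groups: the free group on the edges modulo
the relations `ē = e⁻¹`. -/
def PathGroup (Γ : SerreGraph) : Type :=
  FreeGroup Γ.E ⧸ Subgroup.normalClosure (pathRels Γ)

instance (Γ : SerreGraph) : Group (PathGroup Γ) :=
  inferInstanceAs (Group (FreeGroup Γ.E ⧸ Subgroup.normalClosure (pathRels Γ)))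

/-- The canonical projection from the free group on edges to the path group. -/
def toPathGroup (Γ : SerreGraph) : FreeGroup Γ.E →* PathGroup Γ :=
  QuotientGroup.mk' _

/-- The element of the path group determined by a list of edges. -/
def pathElem (Γ : SerreGraph) (p : List Γ.E) : PathGroup Γ :=
  toPathGroup Γ (p.map FreeGroup.of).prod

/-- The fundamental group `π₁(Γ, v)` of a graph of trivial groups: the subgroup of
the path group consisting of the elements represented by loops at `v` (formally, the
subgroup generated by the loop elements, which coincides with the set of loop
elements). -/
def loopSubgroup (Γ : SerreGraph) (v : Γ.V) : Subgroup (PathGroup Γ) :=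
  Subgroup.closure {g : PathGroup Γ | ∃ p : List Γ.E, Γ.IsPathFrom v v p ∧ g = pathElem Γ p}

/-! Reading a path edge by edge shows that every loop at `v` is a product of
the elements `ε(e)`, with `ε(e) = 1` for tree edges (a loop inside a tree reduces to the
empty path) and `ε(ē) = ε(e)⁻¹`. Conversely the path group retracts onto the free group
on the chosen non-tree edges by killing the tree edges, and this retraction sends `ε(e)`
back to the generator `e`, so the induced map from the free group is injective. -/

namespace SerreGraph

variable {Γ : SerreGraph}

theorem r_bar (e : Γ.E) : Γ.r (Γ.bar e) = Γ.s e := (Γ.s_eq e).symm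

theorem s_bar (e : Γ.E) : Γ.s (Γ.bar e) = Γ.r e := by rw [Γ.s_eq, Γ.bar_bar]

theorem IsPathFrom.append {x y z : Γ.V} {p q : List Γ.E}
    (hp : Γ.IsPathFrom x z p) (hq : Γ.IsPathFrom z y q) : Γ.IsPathFrom x y (p ++ q) := by
  induction p generalizing x with
  | nil => cases hp; exact hq
  | cons e p ih => exact ⟨hp.1, ih hp.2⟩

variable (Γ) in
def reversePath (p : List Γ.E) : List Γ.E := (p.map Γ.bar).reverse

theorem mem_reversePath {p : List Γ.E} {e : Γ.E} : e ∈ Γ.reversePath p ↔ Γ.bar e ∈ p := by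
  simp only [reversePath, List.mem_reverse, List.mem_map]
  exact ⟨fun ⟨f, hf, hfe⟩ => hfe ▸ (Γ.bar_bar f).symm ▸ hf,
    fun h => ⟨Γ.bar e, h, Γ.bar_bar e⟩⟩

theorem IsPathFrom.reversePath {x y : Γ.V} {p : List Γ.E} (hp : Γ.IsPathFrom x y p) :
    Γ.IsPathFrom y x (Γ.reversePath p) := by
  induction p generalizing x with
  | nil => exact hp.symm
  | cons e p ih =>
    have hbar : Γ.IsPathFrom (Γ.s e) x [Γ.bar e] := ⟨r_bar e, (s_bar e).trans hp.1⟩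
    simpa [SerreGraph.reversePath] using (ih hp.2).append hbar

theorem toPathGroup_of_bar (e : Γ.E) :
    toPathGroup Γ (FreeGroup.of (Γ.bar e)) = (toPathGroup Γ (FreeGroup.of e))⁻¹ := by
  rw [eq_inv_iff_mul_eq_one, ← map_mul]
  exact (QuotientGroup.eq_one_iff _).mpr (Subgroup.subset_normalClosure ⟨e, rfl⟩)

variable (Γ) in
theorem pathElem_nil : pathElem Γ [] = 1 := rfl

theorem pathElem_cons (e : Γ.E) (p : List Γ.E) :
    pathElem Γ (e :: p) = toPathGroup Γ (FreeGroup.of e) * pathElem Γ p := by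
  simp [pathElem]

theorem pathElem_append (p q : List Γ.E) :
    pathElem Γ (p ++ q) = pathElem Γ p * pathElem Γ q := by
  simp [pathElem]

theorem pathElem_reversePath (p : List Γ.E) :
    pathElem Γ (Γ.reversePath p) = (pathElem Γ p)⁻¹ := by
  induction p with
  | nil => rfl
  | cons e p ih =>
    simp only [reversePath, List.map_cons, List.reverse_cons] at ih ⊢
    rw [pathElem_append, ih, pathElem_cons, pathElem_cons, pathElem_nil, toPathGroup_of_bar,
      mul_one, mul_inv_rev]

theorem IsPathFrom.exists_reduced {x y : Γ.V} {p : List Γ.E} (hp : Γ.IsPathFrom x y p) :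
    ∃ q : List Γ.E, q.Sublist p ∧ Γ.IsPathFrom x y q ∧ Γ.Reduced q ∧
      pathElem Γ q = pathElem Γ p := by
  induction p generalizing x with
  | nil => exact ⟨[], List.Sublist.slnil, hp, List.isChain_nil, rfl⟩
  | cons e p ih =>
    obtain ⟨q, hqp, hq, hq_red, hq_elem⟩ := ih hp.2
    cases q with
    | nil =>
      exact ⟨[e], by simp, ⟨hp.1, hq⟩, List.isChain_singleton e, by
        rw [pathElem_cons, pathElem_cons, ← hq_elem]⟩
    | cons f q =>
      by_cases hfe : f = Γ.bar e
      · subst hfe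
        refine ⟨q, (List.sublist_cons_self _ _).trans (hqp.trans (List.sublist_cons_self _ _)),
          (s_bar e).trans hp.1 ▸ hq.2, hq_red.tail, ?_⟩
        rw [pathElem_cons, ← hq_elem, pathElem_cons, toPathGroup_of_bar, mul_inv_cancel_left]
      · exact ⟨e :: f :: q, hqp.cons_cons e, ⟨hp.1, hq⟩,
          List.isChain_cons_cons.mpr ⟨hfe, hq_red⟩, by rw [pathElem_cons, hq_elem, pathElem_cons]⟩

theorem pathElem_eq_one_of_isPathFrom_self {T : Set Γ.E}
    (hT : ∀ (x : Γ.V) (p : List Γ.E),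
      Γ.IsPathFrom x x p → Γ.Reduced p → (∀ e ∈ p, e ∈ T) → p = [])
    {x : Γ.V} {p : List Γ.E} (hp : Γ.IsPathFrom x x p) (hpT : ∀ e ∈ p, e ∈ T) :
    pathElem Γ p = 1 := by
  obtain ⟨q, hqp, hq, hq_red, hq_elem⟩ := hp.exists_reduced
  rw [← hq_elem, hT x q hq hq_red fun e he => hpT e (hqp.subset he), pathElem_nil]

end SerreGraph

namespace PathGroup

variable {Γ : SerreGraph} {G : Type*} [Group G]

def lift (f : Γ.E → G) (hf : ∀ e, f (Γ.bar e) = (f e)⁻¹) : PathGroup Γ →* G :=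
  QuotientGroup.lift _ (FreeGroup.lift f) <| Subgroup.normalClosure_le_normal <| by
    rintro _ ⟨e, rfl⟩
    rw [SetLike.mem_coe, MonoidHom.mem_ker, map_mul, FreeGroup.lift_apply_of,
      FreeGroup.lift_apply_of, hf e, inv_mul_cancel]

theorem lift_toPathGroup_of (f : Γ.E → G) (hf : ∀ e, f (Γ.bar e) = (f e)⁻¹) (e : Γ.E) :
    lift f hf (toPathGroup Γ (FreeGroup.of e)) = f e :=
  FreeGroup.lift_apply_of

theorem lift_pathElem (f : Γ.E → G) (hf : ∀ e, f (Γ.bar e) = (f e)⁻¹) (p : List Γ.E) :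
    lift f hf (pathElem Γ p) = (p.map f).prod := by
  induction p with
  | nil => exact map_one _
  | cons e p ih =>
    rw [SerreGraph.pathElem_cons, map_mul, lift_toPathGroup_of, ih, List.map_cons,
      List.prod_cons]

theorem lift_pathElem_eq_one {f : Γ.E → G} (hf : ∀ e, f (Γ.bar e) = (f e)⁻¹) {p : List Γ.E}
    (hp : ∀ e ∈ p, f e = 1) : lift f hf (pathElem Γ p) = 1 := by
  rw [lift_pathElem]
  exact List.prod_eq_one fun _ hx => by
    obtain ⟨e, he, rfl⟩ := List.mem_map.mp hx
    exact hp e he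

end PathGroup

namespace SerreGraph

variable {Γ : SerreGraph} (c : Γ.V → List Γ.E)

/-- `ε(e) = [v, r e] · e · [s e, v]`, with `c x` standing for the tree path `[v, x]`. -/
def edgeLoop (e : Γ.E) : PathGroup Γ :=
  pathElem Γ (c (Γ.r e)) * toPathGroup Γ (FreeGroup.of e) * (pathElem Γ (c (Γ.s e)))⁻¹

def edgeLoopPath (e : Γ.E) : List Γ.E := c (Γ.r e) ++ e :: Γ.reversePath (c (Γ.s e))

theorem pathElem_edgeLoopPath (e : Γ.E) : pathElem Γ (edgeLoopPath c e) = edgeLoop c e := by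
  rw [edgeLoopPath, pathElem_append, pathElem_cons, pathElem_reversePath, edgeLoop, mul_assoc]

theorem isPathFrom_edgeLoopPath {v : Γ.V} (hc : ∀ x, Γ.IsPathFrom v x (c x)) (e : Γ.E) :
    Γ.IsPathFrom v v (edgeLoopPath c e) :=
  (hc _).append ⟨rfl, (hc _).reversePath⟩

theorem edgeLoop_bar (e : Γ.E) : edgeLoop c (Γ.bar e) = (edgeLoop c e)⁻¹ := by
  simp only [edgeLoop, r_bar, s_bar, toPathGroup_of_bar, mul_inv_rev, inv_inv, mul_assoc]

theorem lift_edgeLoop {G : Type*} [Group G] {f : Γ.E → G} (hf : ∀ e, f (Γ.bar e) = (f e)⁻¹)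
    (hfc : ∀ x, ∀ e ∈ c x, f e = 1) (e : Γ.E) : PathGroup.lift f hf (edgeLoop c e) = f e := by
  rw [edgeLoop, map_mul, map_mul, map_inv, PathGroup.lift_pathElem_eq_one hf (hfc _),
    PathGroup.lift_pathElem_eq_one hf (hfc _), PathGroup.lift_toPathGroup_of, one_mul, inv_one,
    mul_one]

theorem edgeLoop_mem_loopSubgroup {v : Γ.V} (hc : ∀ x, Γ.IsPathFrom v x (c x)) (e : Γ.E) :
    edgeLoop c e ∈ loopSubgroup Γ v :=
  Subgroup.subset_closure
    ⟨edgeLoopPath c e, isPathFrom_edgeLoopPath c hc e, (pathElem_edgeLoopPath c e).symm⟩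

theorem edgeLoop_eq_one_of_mem {T : Set Γ.E} (hTbar : ∀ e ∈ T, Γ.bar e ∈ T)
    (hT : ∀ (x : Γ.V) (p : List Γ.E),
      Γ.IsPathFrom x x p → Γ.Reduced p → (∀ e ∈ p, e ∈ T) → p = [])
    {v : Γ.V} (hc : ∀ x, Γ.IsPathFrom v x (c x)) (hcT : ∀ x, ∀ e ∈ c x, e ∈ T)
    {e : Γ.E} (he : e ∈ T) : edgeLoop c e = 1 := by
  rw [← pathElem_edgeLoopPath]
  refine pathElem_eq_one_of_isPathFrom_self hT (isPathFrom_edgeLoopPath c hc e) fun f hf => ?_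
  simp only [edgeLoopPath, List.mem_append, List.mem_cons, mem_reversePath] at hf
  rcases hf with hf | rfl | hf
  · exact hcT _ f hf
  · exact he
  · simpa only [bar_bar] using hTbar _ (hcT _ _ hf)

theorem pathElem_conj_eq_prod_edgeLoop {x y : Γ.V} {p : List Γ.E} (hp : Γ.IsPathFrom x y p) :
    pathElem Γ (c x) * pathElem Γ p * (pathElem Γ (c y))⁻¹ = (p.map (edgeLoop c)).prod := by
  induction p generalizing x with
  | nil => cases hp; rw [pathElem_nil, mul_one, mul_inv_cancel, List.map_nil, List.prod_nil]
  | cons e p ih =>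
    rw [List.map_cons, List.prod_cons, ← ih hp.2, ← hp.1, pathElem_cons, edgeLoop]
    group

theorem pathElem_eq_prod_edgeLoop {v : Γ.V} (hcv : c v = []) {p : List Γ.E}
    (hp : Γ.IsPathFrom v v p) : pathElem Γ p = (p.map (edgeLoop c)).prod := by
  simpa only [hcv, pathElem_nil, one_mul, inv_one, mul_one] using
    pathElem_conj_eq_prod_edgeLoop c hp

variable (O T : Set Γ.E)

open Classical in
noncomputable def edgeLabel (e : Γ.E) : FreeGroup {e : Γ.E // e ∈ O ∧ e ∉ T} :=
  if h : e ∈ O ∧ e ∉ T then FreeGroup.of ⟨e, h⟩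
  else if h' : Γ.bar e ∈ O ∧ Γ.bar e ∉ T then (FreeGroup.of ⟨Γ.bar e, h'⟩)⁻¹
  else 1

variable {O T}

theorem edgeLabel_of_mem_diff {e : Γ.E} (he : e ∈ O ∧ e ∉ T) :
    edgeLabel O T e = FreeGroup.of ⟨e, he⟩ :=
  dif_pos he

theorem edgeLabel_of_bar_mem_diff (hO : ∀ e : Γ.E, e ∈ O ↔ Γ.bar e ∉ O) {e : Γ.E}
    (he : Γ.bar e ∈ O ∧ Γ.bar e ∉ T) : edgeLabel O T e = (FreeGroup.of ⟨Γ.bar e, he⟩)⁻¹ := by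
  have hne : ¬(e ∈ O ∧ e ∉ T) := fun h => (hO e).mp h.1 he.1
  rw [edgeLabel, dif_neg hne, dif_pos he]

theorem mem_of_not_mem_diff (hTbar : ∀ e ∈ T, Γ.bar e ∈ T)
    (hO : ∀ e : Γ.E, e ∈ O ↔ Γ.bar e ∉ O) {e : Γ.E}
    (he : ¬(e ∈ O ∧ e ∉ T)) (hbar : ¬(Γ.bar e ∈ O ∧ Γ.bar e ∉ T)) : e ∈ T := by
  by_contra heT
  by_cases heO : e ∈ O
  · exact he ⟨heO, heT⟩
  · exact hbar ⟨by rwa [hO, Γ.bar_bar], fun h => heT (Γ.bar_bar e ▸ hTbar _ h)⟩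

theorem edgeLabel_of_mem (hTbar : ∀ e ∈ T, Γ.bar e ∈ T) {e : Γ.E} (he : e ∈ T) :
    edgeLabel O T e = 1 := by
  rw [edgeLabel, dif_neg fun h => h.2 he, dif_neg fun h => h.2 (hTbar e he)]

theorem edgeLabel_bar (hTbar : ∀ e ∈ T, Γ.bar e ∈ T) (hO : ∀ e : Γ.E, e ∈ O ↔ Γ.bar e ∉ O)
    (e : Γ.E) : edgeLabel O T (Γ.bar e) = (edgeLabel O T e)⁻¹ := by
  by_cases he : e ∈ O ∧ e ∉ T
  · rw [edgeLabel_of_bar_mem_diff hO (by rwa [bar_bar]), edgeLabel_of_mem_diff he]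
    simp only [bar_bar]
  by_cases hbar : Γ.bar e ∈ O ∧ Γ.bar e ∉ T
  · rw [edgeLabel_of_mem_diff hbar, edgeLabel_of_bar_mem_diff hO hbar, inv_inv]
  · have heT := mem_of_not_mem_diff hTbar hO he hbar
    rw [edgeLabel_of_mem hTbar heT, edgeLabel_of_mem hTbar (hTbar e heT), inv_one]

theorem lift_edgeLabel {G : Type*} [Group G] (hTbar : ∀ e ∈ T, Γ.bar e ∈ T)
    (hO : ∀ e : Γ.E, e ∈ O ↔ Γ.bar e ∉ O) {g : Γ.E → G} (hg : ∀ e, g (Γ.bar e) = (g e)⁻¹)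
    (hgT : ∀ e ∈ T, g e = 1) (e : Γ.E) :
    FreeGroup.lift (fun b : {e : Γ.E // e ∈ O ∧ e ∉ T} => g b.1) (edgeLabel O T e) = g e := by
  by_cases he : e ∈ O ∧ e ∉ T
  · rw [edgeLabel_of_mem_diff he, FreeGroup.lift_apply_of]
  by_cases hbar : Γ.bar e ∈ O ∧ Γ.bar e ∉ T
  · rw [edgeLabel_of_bar_mem_diff hO hbar, map_inv, FreeGroup.lift_apply_of, hg, inv_inv]
  · have heT := mem_of_not_mem_diff hTbar hO he hbar
    rw [edgeLabel_of_mem hTbar heT, map_one, hgT e heT]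

end SerreGraph

open SerreGraph

theorem fundamental_group_free_on_edges_outside_tree_general
    (Γ : SerreGraph) (v : Γ.V) (T : Set Γ.E)
    (hTbar : ∀ e ∈ T, Γ.bar e ∈ T)
    (hTtree : ∀ (x : Γ.V) (p : List Γ.E),
      Γ.IsPathFrom x x p → Γ.Reduced p → (∀ e ∈ p, e ∈ T) → p = [])
    (O : Set Γ.E) (hO : ∀ e : Γ.E, e ∈ O ↔ Γ.bar e ∉ O)
    (c : Γ.V → List Γ.E)
    (hc : ∀ x : Γ.V, Γ.IsPathFrom v x (c x) ∧ Γ.Reduced (c x) ∧ ∀ e ∈ c x, e ∈ T) :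
    Function.Injective
      ⇑(FreeGroup.lift (fun b : {e : Γ.E // e ∈ O ∧ e ∉ T} =>
        pathElem Γ (c (Γ.r b.1)) * toPathGroup Γ (FreeGroup.of b.1) *
          (pathElem Γ (c (Γ.s b.1)))⁻¹)) ∧
    MonoidHom.range
      (FreeGroup.lift (fun b : {e : Γ.E // e ∈ O ∧ e ∉ T} =>
        pathElem Γ (c (Γ.r b.1)) * toPathGroup Γ (FreeGroup.of b.1) *
          (pathElem Γ (c (Γ.s b.1)))⁻¹)) = loopSubgroup Γ v := by
  set L := FreeGroup.lift fun b : {e // e ∈ O ∧ e ∉ T} => edgeLoop c b.1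
  change Function.Injective L ∧ L.range = loopSubgroup Γ v
  have hcT (x : Γ.V) : ∀ e ∈ c x, e ∈ T := (hc x).2.2
  have hε_tree (e : Γ.E) (he : e ∈ T) : edgeLoop c e = 1 :=
    edgeLoop_eq_one_of_mem c hTbar hTtree (fun x => (hc x).1) hcT he
  have hretract : (PathGroup.lift _ (edgeLabel_bar hTbar hO)).comp L = .id _ :=
    FreeGroup.ext_hom _ _ fun b => by
      rw [MonoidHom.comp_apply, FreeGroup.lift_apply_of,
        lift_edgeLoop c _ (fun x e he => edgeLabel_of_mem hTbar (hcT x e he)),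
        edgeLabel_of_mem_diff b.2, MonoidHom.id_apply]
  refine ⟨Function.LeftInverse.injective (DFunLike.congr_fun hretract), le_antisymm ?_ ?_⟩
  · rw [FreeGroup.range_lift_eq_closure, Subgroup.closure_le]
    rintro _ ⟨b, rfl⟩
    exact edgeLoop_mem_loopSubgroup c (fun x => (hc x).1) b.1
  · rw [loopSubgroup, Subgroup.closure_le]
    rintro _ ⟨p, hp, rfl⟩
    have hcv : c v = [] := hTtree v (c v) (hc v).1 (hc v).2.1 (hcT v)
    rw [SetLike.mem_coe, pathElem_eq_prod_edgeLoop c hcv hp]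
    refine list_prod_mem fun _ hε => ?_
    obtain ⟨e, -, rfl⟩ := List.mem_map.mp hε
    exact ⟨_, lift_edgeLabel hTbar hO (edgeLoop_bar c) hε_tree e⟩

/-- for a connected graph `Γ` with maximal subtree `T`, orientation `O`
and base vertex `v`, the fundamental group `π₁(Γ, v)` is free, freely generated by the
elements `ε(e) = [v, r e] · e · [s e, v]` for `e` ranging over the oriented edges not
in `T`; here `c x` denotes the unique reduced path in `T` with range `v` and source
`x`, so `[v, x] = pathElem (c x)` and `[x, v] = (pathElem (c x))⁻¹`.  Free generation
is expressed by saying that the induced homomorphism from the free group on these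
edges is injective with range `π₁(Γ, v)`. -/
theorem fundamental_group_free_on_edges_outside_tree
    (Γ : SerreGraph) (v : Γ.V) (T : Set Γ.E)
    (hTbar : ∀ e ∈ T, Γ.bar e ∈ T)
    (hTspan : ∀ x y : Γ.V, ∃ p : List Γ.E, Γ.IsPathFrom x y p ∧ ∀ e ∈ p, e ∈ T)
    (hTtree : ∀ (x : Γ.V) (p : List Γ.E),
      Γ.IsPathFrom x x p → Γ.Reduced p → (∀ e ∈ p, e ∈ T) → p = [])
    (O : Set Γ.E) (hO : ∀ e : Γ.E, e ∈ O ↔ Γ.bar e ∉ O)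
    (c : Γ.V → List Γ.E)
    (hc : ∀ x : Γ.V, Γ.IsPathFrom v x (c x) ∧ Γ.Reduced (c x) ∧ ∀ e ∈ c x, e ∈ T) :
    Function.Injective
      ⇑(FreeGroup.lift (fun b : {e : Γ.E // e ∈ O ∧ e ∉ T} =>
        pathElem Γ (c (Γ.r b.1)) * toPathGroup Γ (FreeGroup.of b.1) *
          (pathElem Γ (c (Γ.s b.1)))⁻¹)) ∧
    MonoidHom.range
      (FreeGroup.lift (fun b : {e : Γ.E // e ∈ O ∧ e ∉ T} =>
        pathElem Γ (c (Γ.r b.1)) * toPathGroup Γ (FreeGroup.of b.1) *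
          (pathElem Γ (c (Γ.s b.1)))⁻¹)) = loopSubgroup Γ v :=
  fundamental_group_free_on_edges_outside_tree_general Γ v T hTbar hTtree O hO c hc
end

section
/- Consider the profinite group ℤ₂ of 2-adic integers with the odometer action of ℤ generated by x ↦ x + 1, and the space Y = (ℤ/2ℤ) × ℤ₂ with the action of the group Λ generated by homeomorphisms a, b where a(i, ξ) = (i+1, ξ), b(0, ξ) = (0, ξ+1), and b(1, ξ) = (1, ξ). Then the action of Λ on Y is minimal and effective, but not topologically free: every point of {0} × ℤ₂ is fixed by aba and every point of {1} × ℤ₂ is fixed by b. -/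
/-!
Write `b` as the shift by `c = Pi.single false 1` on the sheets `{i} × ℤ₂`. Then `(b a)²`
translates both sheets by `c 0 + c 1 = 1`, so the orbit of `(i, ξ)` contains
`{0, 1} × (ξ + ℤ)`, which is dense because `ℤ` is dense in `ℤ₂`. Effectiveness is automatic
for a group of permutations, and `b ≠ 1` fixes the nonempty open sheet `{1} × ℤ₂`, so its
support is not dense.
-/

open Equiv Set

variable {α G : Type*}

def swapSheet : Perm (Bool × G) := Equiv.prodCongr Equiv.boolNot (Equiv.refl G)

@[simp]
theorem swapSheet_apply (p : Bool × G) : swapSheet p = (!p.1, p.2) := rfl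

section Perm

variable [AddCommGroup G]

def sheetShift (c : α → G) : Perm (α × G) :=
  (Equiv.refl α).prodShear fun i => Equiv.addRight (c i)

@[simp]
theorem sheetShift_apply (c : α → G) (p : α × G) : sheetShift c p = (p.1, p.2 + c p.1) := rfl

theorem sheetShift_add (c d : α → G) : sheetShift (c + d) = sheetShift c * sheetShift d := by
  ext p <;> simp [add_comm, add_left_comm]

theorem sheetShift_zsmul (c : α → G) (n : ℤ) : sheetShift (n • c) = sheetShift c ^ n :=
  let φ : Multiplicative (α → G) →* Perm (α × G) :=
    { toFun c := sheetShift c.toAdd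
      map_one' := by ext <;> simp
      map_mul' c d := sheetShift_add c.toAdd d.toAdd }
  map_zpow φ (.ofAdd c) n

theorem sheetShift_ne_one {c : α → G} {i : α} (hc : c i ≠ 0) : sheetShift c ≠ 1 := fun h =>
  hc (by simpa using congr_arg Prod.snd (Equiv.ext_iff.1 h (i, 0)))

theorem sheetShift_mul_swapSheet_sq (c : Bool → G) :
    (sheetShift c * swapSheet) ^ 2 = sheetShift fun _ => c false + c true := by
  ext ⟨i, ξ⟩ <;> cases i <;>
    simp only [sq, Perm.mul_apply, swapSheet_apply, sheetShift_apply] <;> simp <;> abel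

end Perm

section Topology

variable [TopologicalSpace G]

def swapSheetHomeomorph : (Bool × G) ≃ₜ (Bool × G) :=
  Equiv.boolNot.toHomeomorphOfDiscrete.prodCongr (Homeomorph.refl G)

@[simp]
theorem swapSheetHomeomorph_apply (p : Bool × G) : swapSheetHomeomorph p = (!p.1, p.2) := rfl

variable [TopologicalSpace α] [DiscreteTopology α] [AddCommGroup G] [IsTopologicalAddGroup G]

def sheetShiftHomeomorph (c : α → G) : (α × G) ≃ₜ (α × G) where
  toEquiv := sheetShift c
  continuous_toFun :=
    have hc : Continuous c := continuous_of_discreteTopology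
    continuous_fst.prodMk (continuous_snd.add (hc.comp continuous_fst))
  continuous_invFun :=
    have hc : Continuous c := continuous_of_discreteTopology
    show Continuous fun p : α × G => (p.1, p.2 + -c p.1) from
      continuous_fst.prodMk (continuous_snd.add (hc.comp continuous_fst).neg)

@[simp]
theorem sheetShiftHomeomorph_apply (c : α → G) (p : α × G) :
    sheetShiftHomeomorph c p = (p.1, p.2 + c p.1) :=
  rfl

end Topology

theorem prod_range_zsmul_subset_orbit [AddCommGroup G] {H : Subgroup (Perm (Bool × G))}
    (hswap : swapSheet ∈ H) {g : G} (hshift : (sheetShift fun _ => g) ∈ H) (y : Bool × G) :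
    univ ×ˢ range (fun n : ℤ => y.2 + n • g) ⊆ {z | ∃ h ∈ H, h y = z} := by
  rintro ⟨i, _⟩ ⟨-, n, rfl⟩
  have hn : sheetShift (n • fun _ => g) ∈ H :=
    sheetShift_zsmul (fun _ => g) n ▸ zpow_mem hshift n
  by_cases hi : i = y.1
  · exact ⟨_, hn, by simp [hi]⟩
  · exact ⟨_, mul_mem hswap hn, by simp [Bool.eq_not.2 hi]⟩

theorem dense_orbit_of_denseRange_zsmul [TopologicalSpace G] [AddCommGroup G]
    [IsTopologicalAddGroup G] {H : Subgroup (Perm (Bool × G))} (hswap : swapSheet ∈ H) {g : G}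
    (hshift : (sheetShift fun _ => g) ∈ H) (hg : DenseRange fun n : ℤ => n • g)
    (y : Bool × G) :
    Dense {z | ∃ h ∈ H, h y = z} :=
  (dense_univ.prod (((Homeomorph.addLeft y.2).surjective.denseRange.comp hg
    (continuous_const.add continuous_id)))).mono (prod_range_zsmul_subset_orbit hswap hshift y)

theorem not_dense_setOf_ne_of_eqOn_id {X : Type*} [TopologicalSpace X] {f : X → X} {U : Set X}
    (hU : IsOpen U) (hne : U.Nonempty) (hfix : EqOn f id U) : ¬ Dense {x | f x ≠ x} := fun hd =>
  let ⟨_, hxU, hx⟩ := hd.inter_open_nonempty U hU hne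
  hx (hfix hxU)

/-- on `Y = (ℤ/2ℤ) × ℤ₂` (here `Bool × ℤ_[2]`, with `false ↔ 0`,
`true ↔ 1`), there are homeomorphisms `a (i, ξ) = (i + 1, ξ)`, `b (0, ξ) = (0, ξ + 1)`,
`b (1, ξ) = (1, ξ)`, and the action of the group `Λ` generated by `a` and `b` is
minimal and effective but not topologically free: every point of `{0} × ℤ₂` is fixed
by `a b a` and every point of `{1} × ℤ₂` is fixed by `b`. -/
theorem odometer_example_minimal_effective_not_topFree :
    ∃ a b : (Bool × ℤ_[2]) ≃ₜ (Bool × ℤ_[2]),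
      (∀ (i : Bool) (ξ : ℤ_[2]), a (i, ξ) = (!i, ξ)) ∧
      (∀ ξ : ℤ_[2], b (false, ξ) = (false, ξ + 1)) ∧
      (∀ ξ : ℤ_[2], b (true, ξ) = (true, ξ)) ∧
      -- minimality: every orbit of the subgroup generated by `a` and `b` is dense
      (∀ y : Bool × ℤ_[2], Dense {z : Bool × ℤ_[2] |
        ∃ g ∈ Subgroup.closure ({a.toEquiv, b.toEquiv} : Set (Equiv.Perm (Bool × ℤ_[2]))),
          g y = z}) ∧
      -- effectiveness: only the identity acts as the identity map
      (∀ g ∈ Subgroup.closure ({a.toEquiv, b.toEquiv} : Set (Equiv.Perm (Bool × ℤ_[2]))),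
        (∀ y : Bool × ℤ_[2], g y = y) → g = 1) ∧
      -- the action is not topologically free
      (¬ ∀ g ∈ Subgroup.closure ({a.toEquiv, b.toEquiv} : Set (Equiv.Perm (Bool × ℤ_[2]))),
        g ≠ 1 → Dense {y : Bool × ℤ_[2] | g y ≠ y}) ∧
      -- every point of `{0} × ℤ₂` is fixed by `a b a`
      (∀ ξ : ℤ_[2], (a.toEquiv * b.toEquiv * a.toEquiv) (false, ξ) = (false, ξ)) ∧
      -- every point of `{1} × ℤ₂` is fixed by `b`
      (∀ ξ : ℤ_[2], b (true, ξ) = (true, ξ)) := by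
  set a : (Bool × ℤ_[2]) ≃ₜ _ := swapSheetHomeomorph
  set b : (Bool × ℤ_[2]) ≃ₜ _ := sheetShiftHomeomorph (Pi.single false 1)
  set H := Subgroup.closure ({a.toEquiv, b.toEquiv} : Set (Perm (Bool × ℤ_[2])))
  have ha : swapSheet ∈ H := Subgroup.subset_closure (mem_insert _ _)
  have hb : sheetShift (Pi.single false 1) ∈ H :=
    Subgroup.subset_closure (mem_insert_of_mem _ rfl)
  have hb_fix : ∀ ξ : ℤ_[2], b (true, ξ) = (true, ξ) := fun ξ => by simp [b]
  refine ⟨a, b, fun _ _ => rfl, fun ξ => by simp [b], hb_fix, fun y => ?_,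
    fun g _ hg => Equiv.ext hg, fun h => ?_, fun ξ => by simp [a, b], hb_fix⟩
  · refine dense_orbit_of_denseRange_zsmul ha (g := 1) ?_
      (by simpa using PadicInt.denseRange_intCast) y
    simpa [sheetShift_mul_swapSheet_sq] using pow_mem (mul_mem hb ha) 2
  · refine not_dense_setOf_ne_of_eqOn_id ((isOpen_discrete {true}).prod isOpen_univ)
      ⟨(true, 0), by simp⟩ ?_ (h _ hb (sheetShift_ne_one (i := false) (by simp)))
    rintro ⟨i, ξ⟩ ⟨hi, -⟩
    simp_all
end
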